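/- arXiv:1406.2561 — 3 statements merged into one kernel-verified Lean document; each statement's English description precedes it below -/
import Mathlib

section
/- Let A be a Hopf algebra, σ a normalized Hopf 2-cocycle on A, and τ a normalized Hopf 2-cocycle on the deformed Hopf algebra A_σ. Then the convolution product τ ∗ σ, defined by (τ∗σ)(a,b) = τ(a₁,b₁)σ(a₂,b₂), is a normalized Hopf 2-cocycle on A, and A_{τ∗σ} = (A_σ)_τ as Hopf algebras. -/
open TensorProduct

section ConvolutionFramework

variable (A : Type*) [Ring A] [Algebra ℂ A]

/-- The comultiplication of the tensor-product coalgebra `A ⊗ A`, built from a given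
comultiplication `Δ` on `A`. -/
noncomputable def comul₂ (Δ : A →ₗ[ℂ] A ⊗[ℂ] A) :
    (A ⊗[ℂ] A) →ₗ[ℂ] (A ⊗[ℂ] A) ⊗[ℂ] (A ⊗[ℂ] A) :=
  (TensorProduct.tensorTensorTensorComm ℂ A A A A).toLinearMap ∘ₗ TensorProduct.map Δ Δ

/-- The counit of the tensor-product coalgebra `A ⊗ A`. -/
noncomputable def counit₂ (ε : A →ₗ[ℂ] ℂ) : (A ⊗[ℂ] A) →ₗ[ℂ] ℂ :=
  (LinearMap.mul' ℂ ℂ) ∘ₗ TensorProduct.map ε ε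

/-- Convolution product of two ℂ-valued linear maps on the coalgebra `A ⊗ A`:
`(σ ∗ τ)(a,b) = σ(a₁,b₁) τ(a₂,b₂)`. -/
noncomputable def convC (Δ : A →ₗ[ℂ] A ⊗[ℂ] A) (σ τ : (A ⊗[ℂ] A) →ₗ[ℂ] ℂ) :
    (A ⊗[ℂ] A) →ₗ[ℂ] ℂ :=
  (LinearMap.mul' ℂ ℂ) ∘ₗ TensorProduct.map σ τ ∘ₗ comul₂ A Δ

/-- Convolution product of two `A`-valued linear maps on the coalgebra `A ⊗ A`. -/
noncomputable def convH (Δ : A →ₗ[ℂ] A ⊗[ℂ] A) (f g : (A ⊗[ℂ] A) →ₗ[ℂ] A) :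
    (A ⊗[ℂ] A) →ₗ[ℂ] A :=
  (LinearMap.mul' ℂ A) ∘ₗ TensorProduct.map f g ∘ₗ comul₂ A Δ

/-- View a ℂ-valued map as an `A`-valued map via the unit of `A`. -/
noncomputable def toA (σ : (A ⊗[ℂ] A) →ₗ[ℂ] ℂ) : (A ⊗[ℂ] A) →ₗ[ℂ] A :=
  (Algebra.linearMap ℂ A) ∘ₗ σ

/-- The cocycle-deformed multiplication `m_σ = σ ∗ m ∗ σ⁻¹`. -/
noncomputable def deformMul (Δ : A →ₗ[ℂ] A ⊗[ℂ] A) (m : (A ⊗[ℂ] A) →ₗ[ℂ] A)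
    (σ σinv : (A ⊗[ℂ] A) →ₗ[ℂ] ℂ) : (A ⊗[ℂ] A) →ₗ[ℂ] A :=
  convH A Δ (convH A Δ (toA A σ) m) (toA A σinv)

/-- The linear map `a ⊗ (b ⊗ c) ↦ σ(b₁,c₁) σ(a, b₂·c₂)` (left side of the cocycle
condition), for the multiplication `m`. -/
noncomputable def cocyLHS (Δ : A →ₗ[ℂ] A ⊗[ℂ] A) (m : (A ⊗[ℂ] A) →ₗ[ℂ] A)
    (σ : (A ⊗[ℂ] A) →ₗ[ℂ] ℂ) : (A ⊗[ℂ] (A ⊗[ℂ] A)) →ₗ[ℂ] ℂ :=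
  (LinearMap.mul' ℂ ℂ) ∘ₗ TensorProduct.map σ σ ∘ₗ
    (TensorProduct.leftComm ℂ A (A ⊗[ℂ] A) A).toLinearMap ∘ₗ
      LinearMap.lTensor A ((LinearMap.lTensor (A ⊗[ℂ] A) m) ∘ₗ comul₂ A Δ)

/-- The linear map `a ⊗ (b ⊗ c) ↦ σ(a₁,b₁) σ(a₂·b₂, c)` (right side of the cocycle
condition), for the multiplication `m`. -/
noncomputable def cocyRHS (Δ : A →ₗ[ℂ] A ⊗[ℂ] A) (m : (A ⊗[ℂ] A) →ₗ[ℂ] A)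
    (σ : (A ⊗[ℂ] A) →ₗ[ℂ] ℂ) : (A ⊗[ℂ] (A ⊗[ℂ] A)) →ₗ[ℂ] ℂ :=
  (LinearMap.mul' ℂ ℂ) ∘ₗ TensorProduct.map σ σ ∘ₗ
    (TensorProduct.assoc ℂ (A ⊗[ℂ] A) A A).toLinearMap ∘ₗ
      LinearMap.rTensor A ((LinearMap.lTensor (A ⊗[ℂ] A) m) ∘ₗ comul₂ A Δ) ∘ₗ
        (TensorProduct.assoc ℂ A A A).symm.toLinearMap

/-- `σ` satisfies the Hopf 2-cocycle condition
`σ(b₁,c₁) σ(a, b₂c₂) = σ(a₁,b₁) σ(a₂b₂, c)` with respect to the multiplication `m`. -/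
def IsHopf2Cocycle (Δ : A →ₗ[ℂ] A ⊗[ℂ] A) (m : (A ⊗[ℂ] A) →ₗ[ℂ] A)
    (σ : (A ⊗[ℂ] A) →ₗ[ℂ] ℂ) : Prop :=
  cocyLHS A Δ m σ = cocyRHS A Δ m σ

/-- `σ` is normalized: `σ(a,1) = ε(a) = σ(1,a)`. -/
def IsNormalizedCocycle (ε : A →ₗ[ℂ] ℂ) (σ : (A ⊗[ℂ] A) →ₗ[ℂ] ℂ) : Prop :=
  ∀ a : A, σ (a ⊗ₜ[ℂ] (1 : A)) = ε a ∧ σ ((1 : A) ⊗ₜ[ℂ] a) = ε a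

/-- `σinv` is a convolution inverse of `σ` on the coalgebra `A ⊗ A`. -/
def IsConvInverse (Δ : A →ₗ[ℂ] A ⊗[ℂ] A) (ε : A →ₗ[ℂ] ℂ)
    (σ σinv : (A ⊗[ℂ] A) →ₗ[ℂ] ℂ) : Prop :=
  convC A Δ σ σinv = counit₂ A ε ∧ convC A Δ σinv σ = counit₂ A ε

end ConvolutionFramework

/-!
On `A ⊗ (A ⊗ A)` the cocycle condition for `σ` is the identity `σ₂₃ ∗ σ₁,₂₃ = σ₁₂ ∗ σ₁₂,₃` in
the convolution monoid, each leg being `σ` pulled back along a map built from `ε` and the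
multiplication. These maps are coalgebra maps, so every leg is multiplicative in `σ`. In the
deformed product `m_σ = σ ∗ m ∗ σ⁻¹` the scalar factors pass through `τ`, so the legs of `τ` for
`m_σ` are `σ₂₃ ∗ τ₁,₂₃ ∗ σ₂₃⁻¹` and `σ₁₂ ∗ τ₁₂,₃ ∗ σ₁₂⁻¹`. Inserting `σ₂₃⁻¹ ∗ σ₂₃` into
`τ₂₃ ∗ σ₂₃ ∗ τ₁,₂₃ ∗ σ₁,₂₃` splits it into the left sides of the cocycle conditions of `τ` on `A_σ`
and of `σ`; replacing them by the right sides and cancelling `σ₁₂⁻¹ ∗ σ₁₂` gives the condition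
for `τ ∗ σ`. The identity `A_{τ∗σ} = (A_σ)_τ` is associativity of convolution.
-/

open Coalgebra WithConv

section Convolution

variable {R C D B : Type*} [CommSemiring R] [AddCommMonoid C] [Module R C] [Coalgebra R C]
  [AddCommMonoid D] [Module R D] [Coalgebra R D] [Semiring B] [Algebra R B]

lemma Coalgebra.sum_smul_counit {a : C} {ι : Type*} (𝓡 : Repr R a ι) :
    ∑ i ∈ 𝓡.index, counit (R := R) (𝓡.right i) • 𝓡.left i = a := by
  simpa only [map_sum, lift.tmul, LinearMap.flip_apply, LinearMap.lsmul_apply, one_smul]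
    using congr(lift (LinearMap.lsmul R C).flip $(sum_tmul_counit_eq (R := R) 𝓡))

variable (B) in
noncomputable def convPrecomp (f : C →ₗc[R] D) :
    WithConv (D →ₗ[R] B) →* WithConv (C →ₗ[R] B) where
  toFun g := toConv (g.ofConv ∘ₗ f)
  map_one' := by
    ext x
    simp [LinearMap.convOne_def]
  map_mul' g h := by
    ext x
    exact congr($(LinearMap.convMul_comp_coalgHom_distrib g h f) x)

@[simp]
lemma ofConv_convPrecomp (f : C →ₗc[R] D) (g : WithConv (D →ₗ[R] B)) :
    (convPrecomp B f g).ofConv = g.ofConv ∘ₗ f := rfl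

variable (R C D) in
noncomputable def counitTensorLeft : C ⊗[R] D →ₗc[R] D :=
  (Coalgebra.TensorProduct.lid R D).toCoalgHom.comp
    (Coalgebra.TensorProduct.map (counitCoalgHom R C) (CoalgHom.id R D))

variable (R C D) in
noncomputable def counitTensorRight : D ⊗[R] C →ₗc[R] D :=
  (Coalgebra.TensorProduct.rid R R D).toCoalgHom.comp
    (Coalgebra.TensorProduct.map (CoalgHom.id R D) (counitCoalgHom R C))

@[simp]
lemma counitTensorLeft_tmul (c : C) (d : D) :
    counitTensorLeft R C D (c ⊗ₜ d) = counit (R := R) c • d := rfl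

@[simp]
lemma counitTensorRight_tmul (d : D) (c : C) :
    counitTensorRight R C D (d ⊗ₜ c) = counit (R := R) c • d := rfl

lemma comp_lTensor_algebraMap_convMul (τ : C ⊗[R] B →ₗ[R] R) (φ : D →ₗ[R] R) (h : D →ₗ[R] B) :
    τ ∘ₗ (toConv (Algebra.linearMap R B ∘ₗ φ) * toConv h).ofConv.lTensor C =
      (convPrecomp R (counitTensorLeft R C D) (toConv φ) * toConv (τ ∘ₗ h.lTensor C)).ofConv := by
  ext c d
  conv_lhs => rw [← sum_counit_smul (ℛ R c)]
  simp [← (ℛ R c).eq, ← (ℛ R d).eq, sum_tmul, tmul_sum, ← Algebra.smul_def, tmul_smul,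
    Finset.mul_sum, Finset.sum_comm (s := (ℛ R c).index), mul_assoc]

lemma comp_lTensor_convMul_algebraMap (τ : C ⊗[R] B →ₗ[R] R) (h : D →ₗ[R] B) (ψ : D →ₗ[R] R) :
    τ ∘ₗ (toConv h * toConv (Algebra.linearMap R B ∘ₗ ψ)).ofConv.lTensor C =
      (toConv (τ ∘ₗ h.lTensor C) * convPrecomp R (counitTensorLeft R C D) (toConv ψ)).ofConv := by
  ext c d
  conv_lhs => rw [← sum_smul_counit (ℛ R c)]
  simp [← (ℛ R c).eq, ← (ℛ R d).eq, sum_tmul, tmul_sum, ← Algebra.commutes,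
    ← Algebra.smul_def, tmul_smul, Finset.mul_sum, Finset.sum_comm (s := (ℛ R c).index),
    mul_comm, mul_assoc]

lemma comp_rTensor_algebraMap_convMul (τ : B ⊗[R] C →ₗ[R] R) (φ : D →ₗ[R] R) (h : D →ₗ[R] B) :
    τ ∘ₗ (toConv (Algebra.linearMap R B ∘ₗ φ) * toConv h).ofConv.rTensor C =
      (convPrecomp R (counitTensorRight R C D) (toConv φ) * toConv (τ ∘ₗ h.rTensor C)).ofConv := by
  ext d c
  conv_lhs => rw [← sum_counit_smul (ℛ R c)]
  simp [← (ℛ R c).eq, ← (ℛ R d).eq, sum_tmul, tmul_sum, ← Algebra.smul_def, ← smul_tmul',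
    Finset.mul_sum, mul_assoc]

lemma comp_rTensor_convMul_algebraMap (τ : B ⊗[R] C →ₗ[R] R) (h : D →ₗ[R] B) (ψ : D →ₗ[R] R) :
    τ ∘ₗ (toConv h * toConv (Algebra.linearMap R B ∘ₗ ψ)).ofConv.rTensor C =
      (toConv (τ ∘ₗ h.rTensor C) * convPrecomp R (counitTensorRight R C D) (toConv ψ)).ofConv := by
  ext d c
  conv_lhs => rw [← sum_smul_counit (ℛ R c)]
  simp [← (ℛ R c).eq, ← (ℛ R d).eq, sum_tmul, tmul_sum, ← Algebra.commutes,
    ← Algebra.smul_def, ← smul_tmul', Finset.mul_sum, mul_comm, mul_assoc]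

end Convolution

lemma mul_mul_mul_eq_of_mul_eq_one {M : Type*} [Monoid M] {x y z w i : M} (h : i * y = 1) :
    x * y * (z * w) = x * (y * z * i) * (y * w) := by
  simp only [mul_assoc]
  rw [← mul_assoc i, h, one_mul]

section HopfCocycle

variable {A : Type*} [Ring A] [Bialgebra ℂ A]

lemma comul₂_comul : comul₂ A comul = (comul : A ⊗[ℂ] A →ₗ[ℂ] _) := by
  ext; rfl

lemma counit₂_counit : counit₂ A counit = (counit : A ⊗[ℂ] A →ₗ[ℂ] ℂ) := by
  ext; simp [counit₂, mul_comm]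

lemma convC_eq_convMul (σ τ : A ⊗[ℂ] A →ₗ[ℂ] ℂ) :
    convC A comul σ τ = (toConv σ * toConv τ).ofConv := by
  rw [convC, comul₂_comul]; rfl

lemma convH_eq_convMul (f g : A ⊗[ℂ] A →ₗ[ℂ] A) :
    convH A comul f g = (toConv f * toConv g).ofConv := by
  rw [convH, comul₂_comul]; rfl

lemma toA_convC (σ τ : A ⊗[ℂ] A →ₗ[ℂ] ℂ) :
    toA A (convC A comul σ τ) = convH A comul (toA A σ) (toA A τ) := by
  rw [convC_eq_convMul, convH_eq_convMul]
  exact LinearMap.algHom_comp_convMul_distrib (Algebra.ofId ℂ A) _ _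

lemma isConvInverse_iff (σ σinv : A ⊗[ℂ] A →ₗ[ℂ] ℂ) :
    IsConvInverse A comul counit σ σinv ↔
      toConv σ * toConv σinv = 1 ∧ toConv σinv * toConv σ = 1 := by
  simp only [IsConvInverse, convC_eq_convMul, counit₂_counit, WithConv.ext_iff,
    LinearMap.convOne_def, Algebra.linearMap_self, LinearMap.id_comp]

/- The legs `σ₂₃ = ε ⊗ σ`, `σ₁₂ = σ ⊗ ε`, `σ₁,₂₃ = σ ∘ (id ⊗ m)` and `σ₁₂,₃ = σ ∘ (m ⊗ id)`
on `A ⊗ (A ⊗ A)`. -/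

variable (A) in
noncomputable def leg₂₃ :
    WithConv (A ⊗[ℂ] A →ₗ[ℂ] ℂ) →* WithConv (A ⊗[ℂ] (A ⊗[ℂ] A) →ₗ[ℂ] ℂ) :=
  convPrecomp ℂ (counitTensorLeft ℂ A (A ⊗[ℂ] A))

variable (A) in
noncomputable def leg₁₂ :
    WithConv (A ⊗[ℂ] A →ₗ[ℂ] ℂ) →* WithConv (A ⊗[ℂ] (A ⊗[ℂ] A) →ₗ[ℂ] ℂ) :=
  convPrecomp ℂ ((counitTensorRight ℂ A (A ⊗[ℂ] A)).comp
    (Coalgebra.TensorProduct.assoc ℂ ℂ A A A).symm.toCoalgHom)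

noncomputable def leg₁_₂₃ (m : A ⊗[ℂ] A →ₗ[ℂ] A) (σ : WithConv (A ⊗[ℂ] A →ₗ[ℂ] ℂ)) :
    WithConv (A ⊗[ℂ] (A ⊗[ℂ] A) →ₗ[ℂ] ℂ) :=
  toConv (σ.ofConv ∘ₗ m.lTensor A)

noncomputable def leg₁₂_₃ (m : A ⊗[ℂ] A →ₗ[ℂ] A) (σ : WithConv (A ⊗[ℂ] A →ₗ[ℂ] ℂ)) :
    WithConv (A ⊗[ℂ] (A ⊗[ℂ] A) →ₗ[ℂ] ℂ) :=
  toConv (σ.ofConv ∘ₗ m.rTensor A ∘ₗ (TensorProduct.assoc ℂ A A A).symm.toLinearMap)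

lemma leg₁_₂₃_mul (σ τ : WithConv (A ⊗[ℂ] A →ₗ[ℂ] ℂ)) :
    leg₁_₂₃ (LinearMap.mul' ℂ A) (σ * τ) =
      leg₁_₂₃ (LinearMap.mul' ℂ A) σ * leg₁_₂₃ (LinearMap.mul' ℂ A) τ :=
  map_mul (convPrecomp ℂ
    (Coalgebra.TensorProduct.map (CoalgHom.id ℂ A) (Bialgebra.mulCoalgHom ℂ A))) σ τ

lemma leg₁₂_₃_mul (σ τ : WithConv (A ⊗[ℂ] A →ₗ[ℂ] ℂ)) :
    leg₁₂_₃ (LinearMap.mul' ℂ A) (σ * τ) =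
      leg₁₂_₃ (LinearMap.mul' ℂ A) σ * leg₁₂_₃ (LinearMap.mul' ℂ A) τ :=
  map_mul (convPrecomp ℂ
    ((Coalgebra.TensorProduct.map (Bialgebra.mulCoalgHom ℂ A) (CoalgHom.id ℂ A)).comp
      (Coalgebra.TensorProduct.assoc ℂ ℂ A A A).symm.toCoalgHom)) σ τ

lemma leg₁_₂₃_deformMul (m : A ⊗[ℂ] A →ₗ[ℂ] A) (σ σinv : A ⊗[ℂ] A →ₗ[ℂ] ℂ)
    (τ : WithConv (A ⊗[ℂ] A →ₗ[ℂ] ℂ)) :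
    leg₁_₂₃ (deformMul A comul m σ σinv) τ =
      leg₂₃ A (toConv σ) * leg₁_₂₃ m τ * leg₂₃ A (toConv σinv) := by
  rw [deformMul, convH_eq_convMul, convH_eq_convMul]
  apply WithConv.ext
  rw [leg₁_₂₃, toA, toA, comp_lTensor_convMul_algebraMap, comp_lTensor_algebraMap_convMul]
  rfl

lemma leg₁₂_₃_deformMul (m : A ⊗[ℂ] A →ₗ[ℂ] A) (σ σinv : A ⊗[ℂ] A →ₗ[ℂ] ℂ)
    (τ : WithConv (A ⊗[ℂ] A →ₗ[ℂ] ℂ)) :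
    leg₁₂_₃ (deformMul A comul m σ σinv) τ =
      leg₁₂ A (toConv σ) * leg₁₂_₃ m τ * leg₁₂ A (toConv σinv) := by
  rw [deformMul, convH_eq_convMul, convH_eq_convMul]
  apply WithConv.ext
  rw [leg₁₂_₃, toA, toA, ← LinearMap.comp_assoc, comp_rTensor_convMul_algebraMap,
    comp_rTensor_algebraMap_convMul]
  change (convPrecomp ℂ (Coalgebra.TensorProduct.assoc ℂ ℂ A A A).symm.toCoalgHom
    (_ * _ * _)).ofConv = _
  rw [map_mul, map_mul]
  rfl

lemma cocyLHS_eq_leg₂₃_mul (m : A ⊗[ℂ] A →ₗ[ℂ] A) (σ : A ⊗[ℂ] A →ₗ[ℂ] ℂ) :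
    cocyLHS A comul m σ = (leg₂₃ A (toConv σ) * leg₁_₂₃ m (toConv σ)).ofConv := by
  ext a b c
  conv_lhs => rw [← sum_counit_smul (ℛ ℂ a)]
  simp [cocyLHS, comul₂_comul, leg₂₃, leg₁_₂₃, ← (ℛ ℂ a).eq, ← (ℛ ℂ b).eq, ← (ℛ ℂ c).eq,
    sum_tmul, tmul_sum, Finset.mul_sum, Finset.sum_comm (s := (ℛ ℂ a).index), mul_assoc]

lemma cocyRHS_eq_leg₁₂_mul (m : A ⊗[ℂ] A →ₗ[ℂ] A) (σ : A ⊗[ℂ] A →ₗ[ℂ] ℂ) :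
    cocyRHS A comul m σ = (leg₁₂ A (toConv σ) * leg₁₂_₃ m (toConv σ)).ofConv := by
  ext a b c
  conv_lhs => rw [← sum_counit_smul (ℛ ℂ c)]
  simp [cocyRHS, comul₂_comul, leg₁₂, leg₁₂_₃, ← (ℛ ℂ a).eq, ← (ℛ ℂ b).eq, ← (ℛ ℂ c).eq,
    sum_tmul, tmul_sum, Finset.mul_sum, mul_assoc]

lemma isHopf2Cocycle_iff (m : A ⊗[ℂ] A →ₗ[ℂ] A) (σ : A ⊗[ℂ] A →ₗ[ℂ] ℂ) :
    IsHopf2Cocycle A comul m σ ↔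
      leg₂₃ A (toConv σ) * leg₁_₂₃ m (toConv σ) = leg₁₂ A (toConv σ) * leg₁₂_₃ m (toConv σ) := by
  rw [IsHopf2Cocycle, cocyLHS_eq_leg₂₃_mul, cocyRHS_eq_leg₁₂_mul, WithConv.ext_iff]

lemma IsHopf2Cocycle.convC {σ σinv τ : A ⊗[ℂ] A →ₗ[ℂ] ℂ}
    (hσ : IsHopf2Cocycle A comul (LinearMap.mul' ℂ A) σ) (hσi : toConv σinv * toConv σ = 1)
    (hτ : IsHopf2Cocycle A comul (deformMul A comul (LinearMap.mul' ℂ A) σ σinv) τ) :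
    IsHopf2Cocycle A comul (LinearMap.mul' ℂ A) (convC A comul τ σ) := by
  rw [isHopf2Cocycle_iff] at hσ hτ ⊢
  rw [leg₁_₂₃_deformMul, leg₁₂_₃_deformMul] at hτ
  have h₂₃ : leg₂₃ A (toConv σinv) * leg₂₃ A (toConv σ) = 1 := by rw [← map_mul, hσi, map_one]
  have h₁₂ : leg₁₂ A (toConv σinv) * leg₁₂ A (toConv σ) = 1 := by rw [← map_mul, hσi, map_one]
  rw [convC_eq_convMul, toConv_ofConv, map_mul, map_mul, leg₁_₂₃_mul, leg₁₂_₃_mul,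
    mul_mul_mul_eq_of_mul_eq_one h₂₃, hτ, hσ, ← mul_mul_mul_eq_of_mul_eq_one h₁₂]

lemma IsNormalizedCocycle.convC {σ τ : A ⊗[ℂ] A →ₗ[ℂ] ℂ} (hσ : IsNormalizedCocycle A counit σ)
    (hτ : IsNormalizedCocycle A counit τ) : IsNormalizedCocycle A counit (convC A comul σ τ) := by
  intro a
  simp [convC_eq_convMul, ← (ℛ ℂ a).eq, Algebra.TensorProduct.one_def, sum_tmul, tmul_sum, hσ _,
    hτ _]

lemma IsConvInverse.convC {σ σinv τ τinv : A ⊗[ℂ] A →ₗ[ℂ] ℂ}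
    (hσ : IsConvInverse A comul counit σ σinv) (hτ : IsConvInverse A comul counit τ τinv) :
    IsConvInverse A comul counit (convC A comul τ σ) (convC A comul σinv τinv) := by
  rw [isConvInverse_iff] at hσ hτ ⊢
  simp only [convC_eq_convMul, toConv_ofConv]
  constructor
  · rw [mul_assoc, ← mul_assoc (toConv σ), hσ.1, one_mul, hτ.1]
  · rw [mul_assoc, ← mul_assoc (toConv τinv), hτ.2, one_mul, hσ.2]

lemma deformMul_deformMul (m : A ⊗[ℂ] A →ₗ[ℂ] A) (σ σinv τ τinv : A ⊗[ℂ] A →ₗ[ℂ] ℂ) :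
    deformMul A comul (deformMul A comul m σ σinv) τ τinv =
      deformMul A comul m (convC A comul τ σ) (convC A comul σinv τinv) := by
  simp only [deformMul, toA_convC, convH_eq_convMul, toConv_ofConv, mul_assoc]

end HopfCocycle

section

open Coalgebra

variable (A : Type*) [Ring A] [HopfAlgebra ℂ A]

/-- if `σ` is a normalized Hopf 2-cocycle on a Hopf algebra `A` (with
convolution inverse `σinv`) and `τ` is a normalized Hopf 2-cocycle on the deformation
`A_σ` (with convolution inverse `τinv`), then the convolution product `τ ∗ σ` is a
normalized Hopf 2-cocycle on `A` (with convolution inverse `σinv ∗ τinv`), and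
`A_{τ∗σ} = (A_σ)_τ` as Hopf algebras (the coalgebra structures agree by definition, and
the deformed multiplications coincide). -/
theorem conv_cocycle_deformation
    (σ σinv τ τinv : (A ⊗[ℂ] A) →ₗ[ℂ] ℂ)
    (hσ : IsHopf2Cocycle A comul (LinearMap.mul' ℂ A) σ)
    (hσn : IsNormalizedCocycle A counit σ)
    (hσi : IsConvInverse A comul counit σ σinv)
    (hτ : IsHopf2Cocycle A comul (deformMul A comul (LinearMap.mul' ℂ A) σ σinv) τ)
    (hτn : IsNormalizedCocycle A counit τ)
    (hτi : IsConvInverse A comul counit τ τinv) :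
    IsHopf2Cocycle A comul (LinearMap.mul' ℂ A) (convC A comul τ σ) ∧
    IsNormalizedCocycle A counit (convC A comul τ σ) ∧
    IsConvInverse A comul counit (convC A comul τ σ) (convC A comul σinv τinv) ∧
    deformMul A comul (LinearMap.mul' ℂ A) (convC A comul τ σ) (convC A comul σinv τinv)
      = deformMul A comul (deformMul A comul (LinearMap.mul' ℂ A) σ σinv) τ τinv :=
  ⟨hσ.convC ((isConvInverse_iff σ σinv).1 hσi).2 hτ, hτn.convC hσn, hσi.convC hτi,
    (deformMul_deformMul _ σ σinv τ τinv).symm⟩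

end
end

section
/- Let H be a Hopf algebra with bijective antipode, R a braided Hopf algebra in the category of Yetter–Drinfeld modules over H, and A = R#H the bosonization. For σ a normalized Hopf 2-cocycle on H, the map σ̃: A ⊗ A → ℂ defined by σ̃(r#h, s#k) = σ(h,k) ε_R(r) ε_R(s) is a normalized Hopf 2-cocycle on A whose restriction to H ⊗ H equals σ. Moreover the assignment σ ↦ σ̃ is injective and is a section of the restriction map Z²(A,ℂ) → Z²(H,ℂ). -/
/-!
The cocycle `σ̃` is the pullback `σ ∘ (π ⊗ π)` of `σ` along the bialgebra projection
`π : R#H → H`. The cocycle identity, the normalization and the convolution-inverse identities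
are built only from comultiplication, multiplication, unit and counit, with which `π` commutes;
so each of them is transported from `σ` to its pullback. Since `π ∘ ι = id`, restricting the
pullback along `ι ⊗ ι` gives back `σ`, so `σ ↦ σ̃` has a left inverse and is injective.
-/

open TensorProduct

section Pullback

variable {R M N P M' N' P' : Type*} [CommSemiring R]
  [AddCommMonoid M] [AddCommMonoid N] [AddCommMonoid P]
  [AddCommMonoid M'] [AddCommMonoid N'] [AddCommMonoid P']
  [Module R M] [Module R N] [Module R P] [Module R M'] [Module R N'] [Module R P']

lemma TensorProduct.leftComm_comp_map (f : M →ₗ[R] M') (g : N →ₗ[R] N') (h : P →ₗ[R] P') :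
    (leftComm R M' N' P').toLinearMap ∘ₗ map f (map g h) =
      map g (map f h) ∘ₗ (leftComm R M N P).toLinearMap :=
  TensorProduct.ext_threefold' fun _ _ _ => rfl

lemma comp_map_comp_map_eq_self_of_comp_eq_id {f : M →ₗ[R] N} {g : N →ₗ[R] M}
    (hfg : f ∘ₗ g = LinearMap.id) (τ : N ⊗[R] N →ₗ[R] P) :
    (τ ∘ₗ map f f) ∘ₗ map g g = τ := by
  rw [LinearMap.comp_assoc, ← map_comp, hfg, map_id, LinearMap.comp_id]

end Pullback

section CocyclePullback

variable {A B : Type*} [Ring A] [Algebra ℂ A] [Ring B] [Algebra ℂ B]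
  {ΔA : A →ₗ[ℂ] A ⊗[ℂ] A} {ΔB : B →ₗ[ℂ] B ⊗[ℂ] B}
  {mA : A ⊗[ℂ] A →ₗ[ℂ] A} {mB : B ⊗[ℂ] B →ₗ[ℂ] B}
  {εA : A →ₗ[ℂ] ℂ} {εB : B →ₗ[ℂ] ℂ} {f : A →ₗ[ℂ] B}

lemma map_map_comp_comul₂ (hΔ : map f f ∘ₗ ΔA = ΔB ∘ₗ f) :
    map (map f f) (map f f) ∘ₗ comul₂ A ΔA = comul₂ B ΔB ∘ₗ map f f := by
  rw [comul₂, comul₂, LinearMap.comp_assoc, ← map_comp, ← hΔ, map_comp,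
    ← LinearMap.comp_assoc, ← LinearMap.comp_assoc, tensorTensorTensorComm_comp_map]

lemma counit₂_comp_map (hε : εB ∘ₗ f = εA) : counit₂ B εB ∘ₗ map f f = counit₂ A εA := by
  rw [counit₂, counit₂, LinearMap.comp_assoc, ← map_comp, hε]

lemma convC_comp_map (hΔ : map f f ∘ₗ ΔA = ΔB ∘ₗ f) (σ τ : B ⊗[ℂ] B →ₗ[ℂ] ℂ) :
    convC A ΔA (σ ∘ₗ map f f) (τ ∘ₗ map f f) = convC B ΔB σ τ ∘ₗ map f f := by
  rw [convC, convC, map_comp, LinearMap.comp_assoc, LinearMap.comp_assoc,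
    map_map_comp_comul₂ hΔ, LinearMap.comp_assoc]

lemma map_map_comp_lTensor_comp_comul₂ (hΔ : map f f ∘ₗ ΔA = ΔB ∘ₗ f)
    (hm : f ∘ₗ mA = mB ∘ₗ map f f) :
    map (map f f) f ∘ₗ (LinearMap.lTensor (A ⊗[ℂ] A) mA ∘ₗ comul₂ A ΔA) =
      (LinearMap.lTensor (B ⊗[ℂ] B) mB ∘ₗ comul₂ B ΔB) ∘ₗ map f f := by
  rw [← LinearMap.comp_assoc, LinearMap.map_comp_lTensor, hm, ← LinearMap.lTensor_comp_map,
    LinearMap.comp_assoc, map_map_comp_comul₂ hΔ, LinearMap.comp_assoc]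

lemma cocyLHS_comp_map (hΔ : map f f ∘ₗ ΔA = ΔB ∘ₗ f) (hm : f ∘ₗ mA = mB ∘ₗ map f f)
    (σ : B ⊗[ℂ] B →ₗ[ℂ] ℂ) :
    cocyLHS A ΔA mA (σ ∘ₗ map f f) = cocyLHS B ΔB mB σ ∘ₗ map f (map f f) := by
  have key : map (map f f) (map f f) ∘ₗ (leftComm ℂ A (A ⊗[ℂ] A) A).toLinearMap ∘ₗ
        LinearMap.lTensor A (LinearMap.lTensor (A ⊗[ℂ] A) mA ∘ₗ comul₂ A ΔA) =
      (leftComm ℂ B (B ⊗[ℂ] B) B).toLinearMap ∘ₗ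
        LinearMap.lTensor B (LinearMap.lTensor (B ⊗[ℂ] B) mB ∘ₗ comul₂ B ΔB) ∘ₗ
          map f (map f f) := by
    rw [← LinearMap.comp_assoc, ← leftComm_comp_map, LinearMap.comp_assoc,
      LinearMap.map_comp_lTensor, map_map_comp_lTensor_comp_comul₂ hΔ hm,
      ← LinearMap.lTensor_comp_map]
  rw [cocyLHS, cocyLHS, map_comp]
  simp only [LinearMap.comp_assoc]
  rw [key]

lemma cocyRHS_comp_map (hΔ : map f f ∘ₗ ΔA = ΔB ∘ₗ f) (hm : f ∘ₗ mA = mB ∘ₗ map f f)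
    (σ : B ⊗[ℂ] B →ₗ[ℂ] ℂ) :
    cocyRHS A ΔA mA (σ ∘ₗ map f f) = cocyRHS B ΔB mB σ ∘ₗ map f (map f f) := by
  have key : map (map f f) (map f f) ∘ₗ (TensorProduct.assoc ℂ (A ⊗[ℂ] A) A A).toLinearMap ∘ₗ
        LinearMap.rTensor A (LinearMap.lTensor (A ⊗[ℂ] A) mA ∘ₗ comul₂ A ΔA) ∘ₗ
          (TensorProduct.assoc ℂ A A A).symm.toLinearMap =
      (TensorProduct.assoc ℂ (B ⊗[ℂ] B) B B).toLinearMap ∘ₗ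
        LinearMap.rTensor B (LinearMap.lTensor (B ⊗[ℂ] B) mB ∘ₗ comul₂ B ΔB) ∘ₗ
          (TensorProduct.assoc ℂ B B B).symm.toLinearMap ∘ₗ map f (map f f) := by
    rw [← LinearMap.comp_assoc, map_map_comp_assoc_eq, LinearMap.comp_assoc,
      ← LinearMap.comp_assoc (h := map (map (map f f) f) f), LinearMap.map_comp_rTensor,
      map_map_comp_lTensor_comp_comul₂ hΔ hm, ← LinearMap.rTensor_comp_map, LinearMap.comp_assoc,
      map_map_comp_assoc_symm_eq]
  rw [cocyRHS, cocyRHS, map_comp]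
  simp only [LinearMap.comp_assoc]
  rw [key]

theorem IsHopf2Cocycle.comp_map {σ : B ⊗[ℂ] B →ₗ[ℂ] ℂ} (hσ : IsHopf2Cocycle B ΔB mB σ)
    (hΔ : map f f ∘ₗ ΔA = ΔB ∘ₗ f) (hm : f ∘ₗ mA = mB ∘ₗ map f f) :
    IsHopf2Cocycle A ΔA mA (σ ∘ₗ map f f) := by
  rw [IsHopf2Cocycle, cocyLHS_comp_map hΔ hm, cocyRHS_comp_map hΔ hm, hσ]

theorem IsNormalizedCocycle.comp_map {σ : B ⊗[ℂ] B →ₗ[ℂ] ℂ} (hσ : IsNormalizedCocycle B εB σ)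
    (hf : f 1 = 1) (hε : εB ∘ₗ f = εA) :
    IsNormalizedCocycle A εA (σ ∘ₗ map f f) := fun a => by
  simp only [LinearMap.comp_apply, map_tmul, hf, (hσ (f a)).1, (hσ (f a)).2, ← hε, and_self]

theorem IsConvInverse.comp_map {σ σinv : B ⊗[ℂ] B →ₗ[ℂ] ℂ}
    (hσ : IsConvInverse B ΔB εB σ σinv) (hΔ : map f f ∘ₗ ΔA = ΔB ∘ₗ f) (hε : εB ∘ₗ f = εA) :
    IsConvInverse A ΔA εA (σ ∘ₗ map f f) (σinv ∘ₗ map f f) := by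
  rw [IsConvInverse, convC_comp_map hΔ, convC_comp_map hΔ, hσ.1, hσ.2, counit₂_comp_map hε]
  exact ⟨rfl, rfl⟩

end CocyclePullback

section

open Coalgebra

/-- For `A = R#H` one has `π(r#h) = ε_R(r) h` and `ι(h) = 1#h`, so that
`σ ∘ (π ⊗ π)` is `σ̃(r#h, s#k) = σ(h,k) ε_R(r) ε_R(s)`. -/
theorem bosonization_cocycle_section
    (H : Type*) [Ring H] [HopfAlgebra ℂ H]
    (A : Type*) [Ring A] [HopfAlgebra ℂ A]
    (π : A →ₐc[ℂ] H) (ι : H →ₐc[ℂ] A)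
    (hsec : π.comp ι = BialgHom.id ℂ H)
    (σ σinv : (H ⊗[ℂ] H) →ₗ[ℂ] ℂ)
    (hσ : IsHopf2Cocycle H comul (LinearMap.mul' ℂ H) σ)
    (hσn : IsNormalizedCocycle H counit σ)
    (hσi : IsConvInverse H comul counit σ σinv) :
    IsHopf2Cocycle A comul (LinearMap.mul' ℂ A)
        (σ ∘ₗ TensorProduct.map π.toLinearMap π.toLinearMap) ∧
    IsNormalizedCocycle A counit (σ ∘ₗ TensorProduct.map π.toLinearMap π.toLinearMap) ∧
    IsConvInverse A comul counit (σ ∘ₗ TensorProduct.map π.toLinearMap π.toLinearMap)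
        (σinv ∘ₗ TensorProduct.map π.toLinearMap π.toLinearMap) ∧
    (σ ∘ₗ TensorProduct.map π.toLinearMap π.toLinearMap) ∘ₗ
        TensorProduct.map ι.toLinearMap ι.toLinearMap = σ ∧
    Function.Injective
      (fun τ : (H ⊗[ℂ] H) →ₗ[ℂ] ℂ => τ ∘ₗ TensorProduct.map π.toLinearMap π.toLinearMap) := by
  have hΔ : map π.toLinearMap π.toLinearMap ∘ₗ comul = comul ∘ₗ π.toLinearMap :=
    CoalgHomClass.map_comp_comul π
  have hm := (π : A →ₐ[ℂ] H).comp_mul'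
  have hε : counit ∘ₗ π.toLinearMap = counit := CoalgHomClass.counit_comp π
  have hπι : π.toLinearMap ∘ₗ ι.toLinearMap = LinearMap.id :=
    congrArg (fun φ : H →ₐc[ℂ] H => φ.toLinearMap) hsec
  have hres := comp_map_comp_map_eq_self_of_comp_eq_id (P := ℂ) hπι
  exact ⟨hσ.comp_map hΔ hm, hσn.comp_map (map_one π) hε, hσi.comp_map hΔ hε, hres σ,
    Function.LeftInverse.injective (g := (· ∘ₗ map ι.toLinearMap ι.toLinearMap)) hres⟩

end
end

section
/- Let X be a subrack of a group Γ (with x ▷ y = xyx^{-1}) and φ ∈ Z²(Γ, ℂ^×) a group 2-cocycle. Then the restriction of φ to X × X satisfies the condition φ(x,z)φ(x▷y, x▷z)φ(x▷(y▷z), x)φ(y▷z, y) = φ(y,z)φ(x, y▷z)φ(x▷(y▷z), x▷y)φ(x▷z, x) for all x,y,z ∈ X. Consequently, for any rack 2-cocycle q on X, the twist q^φ_{x,y} = φ(x,y)φ(x▷y, x)^{-1} q_{x,y} is again a rack 2-cocycle. -/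
/-!
Twisting by `φ` multiplies `q` by `ψ(x, y) = φ(x, y) φ(x ▷ y, x)⁻¹`, so it suffices that `ψ` is
itself a rack 2-cocycle. Three instances of the cocycle identity show that `ψ` is a crossed
homomorphism in its first variable for the conjugation action: `ψ(gh, k) = ψ(g, h ▷ k) ψ(h, k)`.
Expanding `ψ(xy, z)` along `xy` and along `(x ▷ y) x` then gives the rack cocycle condition
`ψ(x, y ▷ z) ψ(y, z) = ψ(x ▷ y, x ▷ z) ψ(x, z)`, which is the claimed identity for `φ`.
-/

/-- A rack 2-cocycle on a subset `X` of a group with conjugation `x ▷ y = x y x⁻¹`. -/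
def IsRackCocycleOn {Γ : Type*} [Group Γ] (X : Set Γ) (q : Γ → Γ → ℂˣ) : Prop :=
  ∀ i ∈ X, ∀ j ∈ X, ∀ k ∈ X,
    q i (j * k * j⁻¹) * q j k = q (i * j * i⁻¹) (i * k * i⁻¹) * q i k

theorem IsRackCocycleOn.mul {Γ : Type*} [Group Γ] {X : Set Γ} {p q : Γ → Γ → ℂˣ}
    (hp : IsRackCocycleOn X p) (hq : IsRackCocycleOn X q) :
    IsRackCocycleOn X (fun x y => p x y * q x y) := by
  intro i hi j hj k hk
  rw [mul_mul_mul_comm, hp i hi j hj k hk, hq i hi j hj k hk, mul_mul_mul_comm]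

def IsGroupTwoCocycle {Γ M : Type*} [Mul Γ] [Mul M] (φ : Γ → Γ → M) : Prop :=
  ∀ g h t : Γ, φ g h * φ (g * h) t = φ h t * φ g (h * t)

namespace IsGroupTwoCocycle

variable {Γ M : Type*} [Group Γ] [CommGroup M] {φ : Γ → Γ → M}

def conjTwist (φ : Γ → Γ → M) (g k : Γ) : M := φ g k * (φ (g * k * g⁻¹) g)⁻¹

theorem conjTwist_mul (hφ : IsGroupTwoCocycle φ) (g h k : Γ) :
    conjTwist φ (g * h) k = conjTwist φ g (h * k * h⁻¹) * conjTwist φ h k := by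
  have e1 := hφ g h k
  have e2 := hφ g (h * k * h⁻¹) h
  have e3 := hφ (g * (h * k * h⁻¹) * g⁻¹) g h
  rw [inv_mul_cancel_right] at e2 e3
  unfold conjTwist
  rw [show g * h * k * (g * h)⁻¹ = g * (h * k * h⁻¹) * g⁻¹ by group]
  apply Additive.ofMul.injective
  replace e1 := congrArg Additive.ofMul e1
  replace e2 := congrArg Additive.ofMul e2
  replace e3 := congrArg Additive.ofMul e3
  simp only [ofMul_mul, ofMul_inv] at e1 e2 e3 ⊢
  linear_combination (norm := abel) e1 - e2 + e3

theorem conjTwist_rack (hφ : IsGroupTwoCocycle φ) (x y z : Γ) :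
    conjTwist φ x (y * z * y⁻¹) * conjTwist φ y z
      = conjTwist φ (x * y * x⁻¹) (x * z * x⁻¹) * conjTwist φ x z := by
  rw [← hφ.conjTwist_mul, ← hφ.conjTwist_mul, inv_mul_cancel_right]

theorem rack_identity (hφ : IsGroupTwoCocycle φ) (x y z : Γ) :
    φ x z * φ (x * y * x⁻¹) (x * z * x⁻¹)
        * φ (x * (y * z * y⁻¹) * x⁻¹) x * φ (y * z * y⁻¹) y
      = φ y z * φ x (y * z * y⁻¹)
          * φ (x * (y * z * y⁻¹) * x⁻¹) (x * y * x⁻¹) * φ (x * z * x⁻¹) x := by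
  have h := hφ.conjTwist_rack x y z
  unfold conjTwist at h
  rw [show x * y * x⁻¹ * (x * z * x⁻¹) * (x * y * x⁻¹)⁻¹ = x * (y * z * y⁻¹) * x⁻¹ by group] at h
  apply Additive.ofMul.injective
  replace h := congrArg Additive.ofMul h
  simp only [ofMul_mul, ofMul_inv] at h ⊢
  linear_combination (norm := abel) -h

theorem isRackCocycleOn_conjTwist {φ : Γ → Γ → ℂˣ} (hφ : IsGroupTwoCocycle φ) (X : Set Γ) :
    IsRackCocycleOn X (conjTwist φ) :=
  fun x _ y _ z _ => hφ.conjTwist_rack x y z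

end IsGroupTwoCocycle

theorem groupCocycle_rackTwist_general {Γ : Type*} [Group Γ] (X : Set Γ)
    (φ : Γ → Γ → ℂˣ)
    (hφ : ∀ g h t : Γ, φ g h * φ (g * h) t = φ h t * φ g (h * t)) :
    (∀ x ∈ X, ∀ y ∈ X, ∀ z ∈ X,
      φ x z * φ (x * y * x⁻¹) (x * z * x⁻¹)
          * φ (x * (y * z * y⁻¹) * x⁻¹) x * φ (y * z * y⁻¹) y
        = φ y z * φ x (y * z * y⁻¹)
            * φ (x * (y * z * y⁻¹) * x⁻¹) (x * y * x⁻¹) * φ (x * z * x⁻¹) x) ∧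
    (∀ q : Γ → Γ → ℂˣ, IsRackCocycleOn X q →
      IsRackCocycleOn X (fun x y => φ x y * (φ (x * y * x⁻¹) x)⁻¹ * q x y)) :=
  ⟨fun x _ y _ z _ => IsGroupTwoCocycle.rack_identity hφ x y z,
    fun _ hq => (IsGroupTwoCocycle.isRackCocycleOn_conjTwist hφ X).mul hq⟩

/-- if `X` is a subrack of a group `Γ` (under conjugation) and `φ` is a
normalized group 2-cocycle on `Γ`, then `φ` satisfies the rack-twisting identity on `X`;
consequently, for any rack 2-cocycle `q` on `X`, the twist
`q^φ_{x,y} = φ(x,y) φ(x▷y,x)⁻¹ q_{x,y}` is again a rack 2-cocycle on `X`. -/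
theorem groupCocycle_rackTwist {Γ : Type*} [Group Γ] (X : Set Γ)
    (hX : ∀ x ∈ X, ∀ y ∈ X, x * y * x⁻¹ ∈ X)
    (φ : Γ → Γ → ℂˣ)
    (hφ : ∀ g h t : Γ, φ g h * φ (g * h) t = φ h t * φ g (h * t))
    (hφ1 : ∀ g : Γ, φ g 1 = 1 ∧ φ 1 g = 1) :
    (∀ x ∈ X, ∀ y ∈ X, ∀ z ∈ X,
      φ x z * φ (x * y * x⁻¹) (x * z * x⁻¹)
          * φ (x * (y * z * y⁻¹) * x⁻¹) x * φ (y * z * y⁻¹) y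
        = φ y z * φ x (y * z * y⁻¹)
            * φ (x * (y * z * y⁻¹) * x⁻¹) (x * y * x⁻¹) * φ (x * z * x⁻¹) x) ∧
    (∀ q : Γ → Γ → ℂˣ, IsRackCocycleOn X q →
      IsRackCocycleOn X (fun x y => φ x y * (φ (x * y * x⁻¹) x)⁻¹ * q x y)) :=
  groupCocycle_rackTwist_general X φ hφ
end
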